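/- Let T be a finite tree on n ≥ 2 vertices with distinct vertices s_1, s_2 at distance 1 (adjacent). Then the number of infection sequences from {s_1, s_2} is C(s_1,s_2;T) = (n−2)! · ∏_{u ∈ T, u ∉ {s_1,s_2}} |T_u(s_1,s_2)|^{-1}, i.e., the q-factor in the two-source formula equals 1 when the sources are adjacent. -/

import Mathlib

open scoped Classical

/-- `σ` is an infection sequence on vertex set `A` from source set `S`. -/
def IsInfSeqOn {V : Type*} (G : SimpleGraph V) (A S : Set V) (σ : List V) : Prop :=
  σ.Nodup ∧ (∀ v, v ∈ σ ↔ v ∈ A \ S) ∧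
  ∀ i (h : i < σ.length), ∃ u, (u ∈ S ∨ u ∈ σ.take i) ∧ G.Adj u σ[i]

/-- The subtree `T_u(s₁,s₂)` hanging off `u` relative to the pair `s₁`, `s₂`. -/
def pairSubtree {V : Type*} (G : SimpleGraph V) (s₁ s₂ u : V) : Set V :=
  {v | (∀ p : G.Walk v s₁, u ∈ p.support) ∧ (∀ p : G.Walk v s₂, u ∈ p.support)}

/-!
If the source set `S` spans a connected subtree, the first infected vertex is some `r` adjacent
to `S`, and the subtrees `T_r(S)` of these candidates partition `V ∖ S`. Infecting `r` leaves
`T_w(S)` unchanged for every other `w ∉ S`, so with `m = |V ∖ S|` the number `N(S)` of infection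
sequences satisfies `N(S) · ∏_{w ∉ S} |T_w(S)| = ∑_r |T_r(S)| · (m - 1)! = m!`, a hook length
formula for trees. Two adjacent sources span such a subtree.
-/
section InfectionSequences

variable {V : Type*} {G : SimpleGraph V} {A S : Set V}

def infectable (G : SimpleGraph V) (S : Set V) : Set V :=
  {r | r ∉ S ∧ ∃ a ∈ S, G.Adj a r}

theorem isInfSeqOn_nil_iff : IsInfSeqOn G A S [] ↔ A ⊆ S := by
  simp [IsInfSeqOn, Set.subset_def]

theorem isInfSeqOn_cons_iff {r : V} {τ : List V} :
    IsInfSeqOn G A S (r :: τ) ↔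
      r ∈ A ∩ infectable G S ∧ IsInfSeqOn G A (insert r S) τ := by
  have hsteps_iff : (∀ i (h : i < (r :: τ).length),
      ∃ u, (u ∈ S ∨ u ∈ (r :: τ).take i) ∧ G.Adj u (r :: τ)[i]) ↔
      (∃ a ∈ S, G.Adj a r) ∧
        ∀ i (h : i < τ.length), ∃ u, (u ∈ insert r S ∨ u ∈ τ.take i) ∧ G.Adj u τ[i] := by
    constructor
    · intro h
      obtain ⟨a, ha, har⟩ := h 0 (by simp)
      refine ⟨⟨a, by simpa using ha, har⟩, fun i hi => ?_⟩
      obtain ⟨u, hu, hadj⟩ := h (i + 1) (by simpa using hi)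
      exact ⟨u, by simpa [or_assoc, or_left_comm] using hu, hadj⟩
    · rintro ⟨⟨a, ha, har⟩, h⟩ (_ | i) hi
      · exact ⟨a, by simp [ha], har⟩
      · obtain ⟨u, hu, hadj⟩ := h i (by simpa using hi)
        exact ⟨u, by simpa [or_assoc, or_left_comm] using hu, hadj⟩
  unfold IsInfSeqOn
  rw [hsteps_iff]
  constructor
  · rintro ⟨hnd, hmem, h0, hsteps⟩
    have hr := (hmem r).1 List.mem_cons_self
    refine ⟨⟨hr.1, hr.2, h0⟩, hnd.of_cons, fun v => ?_, hsteps⟩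
    have hv := hmem v
    have hvr : v ∈ τ → v ≠ r := fun hvτ h => (List.nodup_cons.1 hnd).1 (h ▸ hvτ)
    grind
  · rintro ⟨⟨hrA, hrS, h0⟩, hnd, hmem, hsteps⟩
    have hrτ : r ∉ τ := fun h => ((hmem r).1 h).2 (Set.mem_insert r S)
    refine ⟨List.nodup_cons.2 ⟨hrτ, hnd⟩, fun v => ?_, h0, hsteps⟩
    have hv := hmem v
    grind

theorem setOf_isInfSeqOn_of_subset (hAS : A ⊆ S) : {σ | IsInfSeqOn G A S σ} = {[]} := by
  ext (_ | ⟨r, τ⟩)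
  · simpa [isInfSeqOn_nil_iff] using hAS
  · simp only [Set.mem_ofPred_eq, isInfSeqOn_cons_iff, Set.mem_singleton_iff, reduceCtorEq,
      iff_false, not_and]
    exact fun hr => absurd (hAS hr.1) hr.2.1

theorem finite_setOf_isInfSeqOn [Fintype V] : {σ | IsInfSeqOn G A S σ}.Finite :=
  (List.finite_length_le V (Fintype.card V)).subset fun _ hσ => hσ.1.length_le_card

theorem setOf_isInfSeqOn_eq_biUnion (hAS : ¬ A ⊆ S) :
    {σ | IsInfSeqOn G A S σ} =
      ⋃ r ∈ A ∩ infectable G S, List.cons r '' {τ | IsInfSeqOn G A (insert r S) τ} := by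
  ext (_ | ⟨r, τ⟩)
  · simpa [isInfSeqOn_nil_iff] using hAS
  · simp [isInfSeqOn_cons_iff, and_comm]

theorem ncard_setOf_isInfSeqOn_eq_sum [Fintype V] (hAS : ¬ A ⊆ S) :
    {σ | IsInfSeqOn G A S σ}.ncard =
      ∑ r ∈ (A ∩ infectable G S).toFinset, {τ | IsInfSeqOn G A (insert r S) τ}.ncard := by
  rw [setOf_isInfSeqOn_eq_biUnion hAS, Set.Finite.ncard_biUnion (Set.toFinite _)
    (fun _ _ => finite_setOf_isInfSeqOn.image _), finsum_mem_eq_toFinset_sum]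
  · exact Finset.sum_congr rfl fun r _ => Set.ncard_image_of_injective _ List.cons_injective
  · intro r _ r' _ hrr'
    simp only [Function.onFun, Set.disjoint_left]
    rintro _ ⟨τ, -, rfl⟩ ⟨τ', -, h⟩
    exact hrr' (List.cons_eq_cons.1 h).1.symm

end InfectionSequences

section SourceSubtrees

open SimpleGraph

variable {V : Type*} {G : SimpleGraph V} {S : Set V} {c r u v w : V}

/-- The subtree `T_u(S)` of the paper. -/
def sourceSubtree (G : SimpleGraph V) (S : Set V) (u : V) : Set V :=
  {v | ∀ s ∈ S, ∀ p : G.Walk v s, u ∈ p.support}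

def ReachableWithin (G : SimpleGraph V) (S : Set V) (c : V) : Prop :=
  ∀ s ∈ S, ∃ p : G.Walk s c, ∀ x ∈ p.support, x ∈ S

theorem self_mem_sourceSubtree : u ∈ sourceSubtree G S u :=
  fun _ _ p => p.start_mem_support

theorem sourceSubtree_subset_compl (hu : u ∉ S) : sourceSubtree G S u ⊆ Sᶜ :=
  fun v hv hvS => hu (List.mem_singleton.1 (hv v hvS .nil) ▸ hvS)

theorem mem_support_of_mem_sourceSubtree {a : V} (hv : v ∈ sourceSubtree G S u) (hu : u ∉ S)
    (ha : a ∈ S) (hwa : G.Adj w a) (p : G.Walk v w) : u ∈ p.support := by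
  have h := hv a ha (p.concat hwa)
  rw [Walk.support_concat, List.mem_append, List.mem_singleton] at h
  exact h.resolve_right fun h => hu (h ▸ ha)

theorem sourceSubtree_insert (hr : r ∈ infectable G S) (hw : w ∉ S) :
    sourceSubtree G (insert r S) w = sourceSubtree G S w := by
  obtain ⟨-, a, ha, har⟩ := hr
  refine Set.Subset.antisymm (fun v hv s hs => hv s (Set.mem_insert_of_mem r hs)) ?_
  rintro v hv s (rfl | hs) p
  · exact mem_support_of_mem_sourceSubtree hv hw ha har.symm p
  · exact hv s hs p

theorem pairwiseDisjoint_sourceSubtree (hG : G.Preconnected) :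
    (infectable G S).PairwiseDisjoint (sourceSubtree G S) := by
  rintro r ⟨hrS, a, ha, har⟩ r' ⟨hr'S, a', ha', har'⟩ hne
  refine Set.disjoint_left.2 fun v hv hv' => hne ?_
  let p := (hG v r').some.bypass
  have hrp : r ∈ p.support := mem_support_of_mem_sourceSubtree hv hrS ha' har'.symm p
  have hr'p : r' ∈ (p.takeUntil r hrp).support :=
    mem_support_of_mem_sourceSubtree hv' hr'S ha har.symm _
  by_contra hne
  exact Walk.endpoint_notMem_support_takeUntil (Walk.bypass_isPath _) hrp (Ne.symm hne) hr'p

theorem SimpleGraph.IsAcyclic.support_subset_support_of_isPath (hG : G.IsAcyclic)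
    {p : G.Walk v w} (hp : p.IsPath) (q : G.Walk v w) : p.support ⊆ q.support := by
  have : p = q.bypass := congrArg Subtype.val
    ((hG.subsingleton_path v w).elim ⟨p, hp⟩ ⟨q.bypass, q.bypass_isPath⟩)
  exact this ▸ q.support_bypass_subset_support

theorem mem_sourceSubtree_of_mem_support (hG : G.IsAcyclic) (hS : ReachableWithin G S c)
    {P : G.Walk v c} (hP : P.IsPath) (hr : r ∈ P.support) (hrS : r ∉ S) :
    v ∈ sourceSubtree G S r := by
  intro s hs q
  obtain ⟨W, hW⟩ := hS s hs
  have h := hG.support_subset_support_of_isPath hP (q.append W) hr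
  rw [Walk.mem_support_append_iff] at h
  exact h.resolve_right fun h => hrS (hW r h)

theorem biUnion_infectable_sourceSubtree (hG : G.IsTree) (hS : ReachableWithin G S c)
    (hc : c ∈ S) : ⋃ r ∈ infectable G S, sourceSubtree G S r = Sᶜ := by
  ext v
  simp only [Set.mem_iUnion, exists_prop, Set.mem_compl_iff]
  refine ⟨fun ⟨r, hr, hv⟩ => sourceSubtree_subset_compl hr.1 hv, fun hv => ?_⟩
  let P := (hG.connected.preconnected v c).some.bypass
  obtain ⟨d, hd, hd₁, hd₂⟩ := P.exists_boundary_dart Sᶜ hv (by simpa using hc)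
  exact ⟨d.fst, ⟨hd₁, d.snd, by simpa using hd₂, d.adj.symm⟩,
    mem_sourceSubtree_of_mem_support hG.isAcyclic hS (Walk.bypass_isPath _)
      (P.dart_fst_mem_support_of_mem_darts hd) hd₁⟩

theorem sum_ncard_sourceSubtree [Fintype V] (hG : G.IsTree) (hS : ReachableWithin G S c)
    (hc : c ∈ S) : ∑ r ∈ (infectable G S).toFinset, (sourceSubtree G S r).ncard = Sᶜ.ncard := by
  rw [← biUnion_infectable_sourceSubtree hG hS hc,
    Set.Finite.ncard_biUnion (Set.toFinite _) (fun _ _ => Set.toFinite _)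
      (pairwiseDisjoint_sourceSubtree hG.connected.preconnected),
    finsum_mem_eq_toFinset_sum]

theorem ReachableWithin.insert (hS : ReachableWithin G S c) (hr : r ∈ infectable G S) :
    ReachableWithin G (insert r S) c := by
  obtain ⟨-, a, ha, har⟩ := hr
  rintro s (rfl | hs)
  · obtain ⟨p, hp⟩ := hS a ha
    refine ⟨.cons har.symm p, fun x hx => ?_⟩
    rcases List.mem_cons.1 (Walk.support_cons _ _ ▸ hx) with rfl | hx
    exacts [Set.mem_insert _ _, Set.mem_insert_of_mem _ (hp x hx)]
  · obtain ⟨p, hp⟩ := hS s hs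
    exact ⟨p, fun x hx => Set.mem_insert_of_mem _ (hp x hx)⟩

theorem ncard_setOf_isInfSeqOn_mul_prod [Fintype V] (hG : G.IsTree) (hS : ReachableWithin G S c) (hc : c ∈ S) :
    {σ | IsInfSeqOn G Set.univ S σ}.ncard *
        ∏ w ∈ Finset.univ.filter (· ∉ S), (sourceSubtree G S w).ncard =
      Sᶜ.ncard.factorial := by
  induction hn : Sᶜ.ncard generalizing S with
  | zero =>
    obtain rfl : S = Set.univ := by
      rwa [Set.ncard_eq_zero (Set.toFinite _), Set.compl_empty_iff] at hn
    simp [setOf_isInfSeqOn_of_subset subset_rfl]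
  | succ n ih =>
    have hS_ne : ¬ Set.univ ⊆ S := fun h => by
      simp [Set.univ_subset_iff.1 h] at hn
    rw [ncard_setOf_isInfSeqOn_eq_sum hS_ne, Finset.sum_mul, Nat.factorial_succ, ← hn,
      ← sum_ncard_sourceSubtree hG hS hc, Finset.sum_mul]
    simp only [Set.univ_inter]
    refine Finset.sum_congr rfl fun r hr => ?_
    rw [Set.mem_toFinset] at hr
    have hcompl : Finset.univ.filter (· ∉ insert r S) = (Finset.univ.filter (· ∉ S)).erase r := by
      ext; simp
    have hn' : (insert r S)ᶜ.ncard = n := by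
      rw [Set.ncard_compl, Set.ncard_insert_of_notMem hr.1, ← Nat.sub_sub, ← Set.ncard_compl, hn,
        Nat.add_sub_cancel]
    rw [← Finset.mul_prod_erase _ _ (by simpa using hr.1), ← hcompl, mul_left_comm,
      ← ih (hS.insert hr) (Set.mem_insert_of_mem r hc) hn']
    congr 2
    refine Finset.prod_congr (by ext; simp) fun w hw => ?_
    rw [sourceSubtree_insert hr (by simp at hw; tauto)]

end SourceSubtrees

theorem adjacent_two_source_count_general {V : Type*} [Fintype V] (G : SimpleGraph V)
    (hG : G.IsTree) (s₁ s₂ : V) (hadj : G.Adj s₁ s₂) :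
    (Set.ncard {σ : List V | IsInfSeqOn G Set.univ {s₁, s₂} σ} : ℝ)
      = (Nat.factorial (Fintype.card V - 2) : ℝ) *
        ∏ w ∈ Finset.univ.filter (fun w => w ∉ ({s₁, s₂} : Set V)),
          ((pairSubtree G s₁ s₂ w).ncard : ℝ)⁻¹ := by
  have hS : ReachableWithin G {s₁, s₂} s₂ := by
    rintro s (rfl | rfl)
    · exact ⟨.cons hadj .nil, by simp⟩
    · exact ⟨.nil, by simp⟩
  have hcount := ncard_setOf_isInfSeqOn_mul_prod hG hS (by simp)
  have hpair : ∀ w, pairSubtree G s₁ s₂ w = sourceSubtree G {s₁, s₂} w := by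
    intro w; ext v; simp [pairSubtree, sourceSubtree]
  have hpos : ∀ w, (0 : ℝ) < (sourceSubtree G {s₁, s₂} w).ncard := fun w => by
    exact_mod_cast (Set.ncard_pos (Set.toFinite _)).2 ⟨w, self_mem_sourceSubtree⟩
  rw [Set.ncard_compl, Set.ncard_pair hadj.ne, Nat.card_eq_fintype_card] at hcount
  simp only [hpair, Finset.prod_inv_distrib, ← div_eq_mul_inv]
  rw [eq_div_iff (Finset.prod_pos fun w _ => hpos w).ne', ← hcount]
  push_cast
  congr 2
  ext; simp

/-- For two adjacent sources `s₁ ∼ s₂` in a tree on `n ≥ 2` vertices, the two-source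
infection sequence count is
`C(s₁,s₂;T) = (n−2)! ∏_{u ∉ {s₁,s₂}} |T_u(s₁,s₂)|⁻¹` (the `q`-factor equals 1). -/
theorem adjacent_two_source_count {V : Type*} [Fintype V] (G : SimpleGraph V)
    (hG : G.IsTree) (s₁ s₂ : V) (hadj : G.Adj s₁ s₂) (hn : 2 ≤ Fintype.card V) :
    (Set.ncard {σ : List V | IsInfSeqOn G Set.univ {s₁, s₂} σ} : ℝ)
      = (Nat.factorial (Fintype.card V - 2) : ℝ) *
        ∏ w ∈ Finset.univ.filter (fun w => w ∉ ({s₁, s₂} : Set V)),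
          ((pairSubtree G s₁ s₂ w).ncard : ℝ)⁻¹ :=
  adjacent_two_source_count_general G hG s₁ s₂ hadj
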